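/- arXiv:1809.05870 — 7 statements merged into one kernel-verified Lean document; each statement's English description precedes it below -/
import Mathlib

section
/- Let n ≥ 1, let R be a symmetric positive semidefinite n×n real matrix, F ∈ ℝⁿ, and v > 0 a real number. Then the matrix M := R − (R F)(R F)ᵀ/(⟨F, R F⟩ + v) is positive semidefinite. Consequently, if in addition R = G M Gᵀ + W for an n×n real matrix G and a symmetric n×n matrix W (i.e., R satisfies the Riccati fixed-point equation), then R − W is positive semidefinite; in particular, if W is positive definite then R is positive definite. -/
/-! The quadratic form of `R - c⁻¹ (R F)(R F)ᵀ` at `x` is `xᵀRx - (xᵀRF)² / c`, which is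
nonnegative by the Cauchy–Schwarz inequality `(xᵀRF)² ≤ (xᵀRx)(FᵀRF)` for the semi-inner
product defined by `R`, as soon as `c ≥ FᵀRF`. The Riccati equation then exhibits `R - W` as the
congruence `G M Gᵀ` of a positive semidefinite matrix, and adding a positive definite `W` to a
positive semidefinite matrix gives a positive definite one. -/

open Matrix

namespace Matrix.PosSemidef

variable {ι 𝕜 : Type*} [Fintype ι]

theorem dotProduct_mulVec_sq_le [CommRing 𝕜] [LinearOrder 𝕜] [IsStrictOrderedRing 𝕜]
    [StarRing 𝕜] [TrivialStar 𝕜] {R : Matrix ι ι 𝕜} (hR : R.PosSemidef) (x y : ι → 𝕜) :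
    (x ⬝ᵥ R *ᵥ y) ^ 2 ≤ (x ⬝ᵥ R *ᵥ x) * (y ⬝ᵥ R *ᵥ y) := by
  classical
  simpa only [toBilin'_apply'] using LinearMap.BilinForm.apply_sq_le_of_symm (toBilin' R)
    (fun z ↦ by simpa [toBilin'_apply'] using hR.dotProduct_mulVec_nonneg z)
    (LinearMap.BilinForm.isSymm_iff.mp <|
      isSymm_toBilin'_iff_isSymm.mpr (isHermitian_iff_isSymm.mp hR.isHermitian)) x y

theorem sub_inv_smul_vecMulVec_mulVec [Field 𝕜] [LinearOrder 𝕜] [IsStrictOrderedRing 𝕜]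
    [StarRing 𝕜] [TrivialStar 𝕜] {R : Matrix ι ι 𝕜} (hR : R.PosSemidef) {F : ι → 𝕜} {c : 𝕜}
    (hc : F ⬝ᵥ R *ᵥ F ≤ c) :
    (R - c⁻¹ • vecMulVec (R *ᵥ F) (R *ᵥ F)).PosSemidef := by
  have hRs : R.IsSymm := isHermitian_iff_isSymm.mp hR.isHermitian
  refine .of_dotProduct_mulVec_nonneg ?_ fun x ↦ ?_
  · rw [isHermitian_iff_isSymm]
    exact hRs.sub (.smul (transpose_vecMulVec _ _) _)
  have hxx : 0 ≤ x ⬝ᵥ R *ᵥ x := by simpa using hR.dotProduct_mulVec_nonneg x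
  have hFF : 0 ≤ F ⬝ᵥ R *ᵥ F := by simpa using hR.dotProduct_mulVec_nonneg F
  have hrankOne : c⁻¹ * (x ⬝ᵥ R *ᵥ F) ^ 2 ≤ x ⬝ᵥ R *ᵥ x := by
    rcases (hFF.trans hc).eq_or_lt with rfl | hc0
    · simpa using hxx -- `c⁻¹ = 0`
    rw [inv_mul_le_iff₀ hc0]
    calc (x ⬝ᵥ R *ᵥ F) ^ 2 ≤ (x ⬝ᵥ R *ᵥ x) * (F ⬝ᵥ R *ᵥ F) := hR.dotProduct_mulVec_sq_le x F
      _ ≤ (x ⬝ᵥ R *ᵥ x) * c := mul_le_mul_of_nonneg_left hc hxx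
      _ = c * (x ⬝ᵥ R *ᵥ x) := mul_comm _ _
  simp only [star_trivial, sub_mulVec, smul_mulVec, vecMulVec_mulVec, dotProduct_sub,
    dotProduct_smul, op_smul_eq_mul, smul_eq_mul, dotProduct_comm (R *ᵥ F) x]
  linarith

end Matrix.PosSemidef

theorem stmt_0_general {n : ℕ} (R G W : Matrix (Fin n) (Fin n) ℝ)
    (F : Fin n → ℝ) (v : ℝ) (hv : 0 < v) (hR : R.PosSemidef) :
    (R - (F ⬝ᵥ (R *ᵥ F) + v)⁻¹ • vecMulVec (R *ᵥ F) (R *ᵥ F)).PosSemidef ∧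
    (R = G * (R - (F ⬝ᵥ (R *ᵥ F) + v)⁻¹ • vecMulVec (R *ᵥ F) (R *ᵥ F)) * Gᵀ + W →
      (R - W).PosSemidef ∧ (W.PosDef → R.PosDef)) := by
  set M := R - (F ⬝ᵥ (R *ᵥ F) + v)⁻¹ • vecMulVec (R *ᵥ F) (R *ᵥ F)
  have hM : M.PosSemidef := hR.sub_inv_smul_vecMulVec_mulVec (le_add_of_nonneg_right hv.le)
  refine ⟨hM, fun hfix ↦ ?_⟩
  have hRW : (R - W).PosSemidef := by
    rw [sub_eq_of_eq_add hfix, ← conjTranspose_eq_transpose_of_trivial]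
    exact hM.mul_mul_conjTranspose_same G
  exact ⟨hRW, fun hWpd ↦ sub_add_cancel R W ▸ PosDef.posSemidef_add hRW hWpd⟩

/-- For `n ≥ 1`, a symmetric positive semidefinite `R`, `F ∈ ℝⁿ` and `v > 0`,
the matrix `M := R − (R F)(R F)ᵀ/(⟨F, R F⟩ + v)` is positive semidefinite. Consequently,
if moreover `R = G M Gᵀ + W` with `W` symmetric, then `R − W` is positive semidefinite;
in particular if `W` is positive definite then `R` is positive definite. -/
theorem stmt_0 {n : ℕ} (hn : 1 ≤ n) (R G W : Matrix (Fin n) (Fin n) ℝ)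
    (F : Fin n → ℝ) (v : ℝ) (hv : 0 < v) (hR : R.PosSemidef) (hW : W.IsSymm) :
    (R - (F ⬝ᵥ (R *ᵥ F) + v)⁻¹ • vecMulVec (R *ᵥ F) (R *ᵥ F)).PosSemidef ∧
    (R = G * (R - (F ⬝ᵥ (R *ᵥ F) + v)⁻¹ • vecMulVec (R *ᵥ F) (R *ᵥ F)) * Gᵀ + W →
      (R - W).PosSemidef ∧ (W.PosDef → R.PosDef)) :=
  stmt_0_general R G W F v hv hR
end

section
/- Let n ≥ 1, let G be a real n×n matrix, F ∈ ℝⁿ, v > 0, W a symmetric n×n real matrix, and let R be a symmetric positive semidefinite n×n matrix satisfying the Riccati fixed-point equation R = G(R − (R F)(R F)ᵀ/(⟨F, R F⟩ + v))Gᵀ + W. For x ∈ ℝⁿ define y := Gᵀx − (⟨R Gᵀx, F⟩/(⟨R F, F⟩ + v))·F. Then ⟨R y, y⟩ = ⟨R x, x⟩ − ⟨W x, x⟩ − (v/(⟨R F, F⟩ + v)²)·⟨R Gᵀx, F⟩². -/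
/-!
Write `z = Gᵀx`, `c = ⟨RF, F⟩ + v` and `a = ⟨Rz, F⟩`, so that `y = z - (a / c) F`.
Testing the Riccati equation against `x` gives `⟨Rx, x⟩ = ⟨Rz, z⟩ - a² / c + ⟨Wx, x⟩`, while
expanding the quadratic form of the symmetric `R` at `y` gives
`⟨Ry, y⟩ = ⟨Rz, z⟩ - 2a² / c + (a / c)² (c - v) = ⟨Rz, z⟩ - a² / c - v a² / c²`.
-/

open Matrix

section QuadraticForm

variable {ι m K : Type*} [Fintype ι] [Fintype m] [CommRing K]

theorem Matrix.IsSymm.mulVec_dotProduct_comm {R : Matrix ι ι K} (hR : R.IsSymm) (u w : ι → K) :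
    (R *ᵥ u) ⬝ᵥ w = (R *ᵥ w) ⬝ᵥ u := by
  rw [dotProduct_comm, dotProduct_mulVec, ← mulVec_transpose, hR.eq]

theorem Matrix.IsSymm.mulVec_sub_smul_dotProduct {R : Matrix ι ι K} (hR : R.IsSymm)
    (z F : ι → K) (s : K) :
    (R *ᵥ (z - s • F)) ⬝ᵥ (z - s • F) =
      (R *ᵥ z) ⬝ᵥ z - 2 * s * ((R *ᵥ z) ⬝ᵥ F) + s ^ 2 * ((R *ᵥ F) ⬝ᵥ F) := by
  simp only [mulVec_sub, mulVec_smul, sub_dotProduct, dotProduct_sub, smul_dotProduct,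
    dotProduct_smul, smul_eq_mul, hR.mulVec_dotProduct_comm F z]
  ring

theorem mul_mul_transpose_mulVec_dotProduct (G : Matrix m ι K) (M : Matrix ι ι K) (x : m → K) :
    ((G * M * Gᵀ) *ᵥ x) ⬝ᵥ x = (M *ᵥ (Gᵀ *ᵥ x)) ⬝ᵥ (Gᵀ *ᵥ x) := by
  rw [← mulVec_mulVec, ← mulVec_mulVec, dotProduct_comm, dotProduct_mulVec, ← mulVec_transpose,
    dotProduct_comm]

theorem vecMulVec_self_mulVec_dotProduct (u x : ι → K) :
    (vecMulVec u u *ᵥ x) ⬝ᵥ x = (u ⬝ᵥ x) ^ 2 := by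
  rw [vecMulVec_mulVec, op_smul_eq_smul, smul_dotProduct, smul_eq_mul, sq]

theorem Matrix.IsSymm.mulVec_dotProduct_of_riccati {R G W : Matrix ι ι K} {F : ι → K} {k : K}
    (hR : R.IsSymm) (hRic : R = G * (R - k • vecMulVec (R *ᵥ F) (R *ᵥ F)) * Gᵀ + W)
    (x : ι → K) :
    (R *ᵥ x) ⬝ᵥ x =
      (R *ᵥ (Gᵀ *ᵥ x)) ⬝ᵥ (Gᵀ *ᵥ x) - k * ((R *ᵥ (Gᵀ *ᵥ x)) ⬝ᵥ F) ^ 2 + (W *ᵥ x) ⬝ᵥ x := by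
  conv_lhs => rw [hRic]
  rw [add_mulVec, add_dotProduct, mul_mul_transpose_mulVec_dotProduct, sub_mulVec, smul_mulVec,
    sub_dotProduct, smul_dotProduct, smul_eq_mul, vecMulVec_self_mulVec_dotProduct,
    hR.mulVec_dotProduct_comm F]

end QuadraticForm

theorem stmt_2_general {n : ℕ} (R G W : Matrix (Fin n) (Fin n) ℝ)
    (F : Fin n → ℝ) (v : ℝ) (hR : R.PosSemidef)
    (hRic : R = G * (R - (F ⬝ᵥ (R *ᵥ F) + v)⁻¹ • vecMulVec (R *ᵥ F) (R *ᵥ F)) * Gᵀ + W)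
    (x y : Fin n → ℝ)
    (hy : y = Gᵀ *ᵥ x - (((R *ᵥ (Gᵀ *ᵥ x)) ⬝ᵥ F) / ((R *ᵥ F) ⬝ᵥ F + v)) • F) :
    (R *ᵥ y) ⬝ᵥ y =
      (R *ᵥ x) ⬝ᵥ x - (W *ᵥ x) ⬝ᵥ x
        - (v / ((R *ᵥ F) ⬝ᵥ F + v) ^ 2) * ((R *ᵥ (Gᵀ *ᵥ x)) ⬝ᵥ F) ^ 2 := by
  have hRsymm : R.IsSymm := isHermitian_iff_isSymm.mp hR.isHermitian
  rw [dotProduct_comm F] at hRic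
  set c := (R *ᵥ F) ⬝ᵥ F + v
  have hx := hRsymm.mulVec_dotProduct_of_riccati hRic x
  -- true also at `c = 0`, where Lean's `c⁻¹` is `0`
  have hcc : c⁻¹ * c * c⁻¹ = c⁻¹ := by simpa using mul_inv_mul_cancel c⁻¹
  rw [hy, hRsymm.mulVec_sub_smul_dotProduct, hx, show (R *ᵥ F) ⬝ᵥ F = c - v by ring]
  simp only [div_eq_mul_inv, ← inv_pow]
  linear_combination ((R *ᵥ (Gᵀ *ᵥ x)) ⬝ᵥ F) ^ 2 * hcc

/-- If the symmetric positive semidefinite `R` satisfies the Riccati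
fixed-point equation, then for `x ∈ ℝⁿ` and
`y := Gᵀx − (⟨R Gᵀx, F⟩/(⟨R F, F⟩ + v))·F` one has
`⟨R y, y⟩ = ⟨R x, x⟩ − ⟨W x, x⟩ − (v/(⟨R F, F⟩ + v)²)·⟨R Gᵀx, F⟩²`. -/
theorem stmt_2 {n : ℕ} (hn : 1 ≤ n) (R G W : Matrix (Fin n) (Fin n) ℝ)
    (F : Fin n → ℝ) (v : ℝ) (hv : 0 < v) (hR : R.PosSemidef) (hW : W.IsSymm)
    (hRic : R = G * (R - (F ⬝ᵥ (R *ᵥ F) + v)⁻¹ • vecMulVec (R *ᵥ F) (R *ᵥ F)) * Gᵀ + W)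
    (x y : Fin n → ℝ)
    (hy : y = Gᵀ *ᵥ x - (((R *ᵥ (Gᵀ *ᵥ x)) ⬝ᵥ F) / ((R *ᵥ F) ⬝ᵥ F + v)) • F) :
    (R *ᵥ y) ⬝ᵥ y =
      (R *ᵥ x) ⬝ᵥ x - (W *ᵥ x) ⬝ᵥ x
        - (v / ((R *ᵥ F) ⬝ᵥ F + v) ^ 2) * ((R *ᵥ (Gᵀ *ᵥ x)) ⬝ᵥ F) ^ 2 :=
  stmt_2_general R G W F v hR hRic x y hy
end

section
/- Let n ≥ 1, let G be a real n×n matrix, F ∈ ℝⁿ, v > 0, W a symmetric positive semidefinite n×n real matrix, and let R be a symmetric positive semidefinite n×n matrix satisfying the Riccati fixed-point equation R = G(R − (R F)(R F)ᵀ/(⟨F, R F⟩ + v))Gᵀ + W. For x ∈ ℝⁿ define y := Gᵀx − (⟨R Gᵀx, F⟩/(⟨R F, F⟩ + v))·F. Then ⟨R y, y⟩ ≤ ⟨R x, x⟩ − ⟨W x, x⟩; in particular, ⟨R y, y⟩ ≤ ⟨R x, x⟩, i.e., the quadratic form x ↦ ⟨R x, x⟩ is non-increasing under the map x ↦ y.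 -/
/-!
Put `z := Gᵀx`, `a := ⟨R F, F⟩`, `b := ⟨R z, F⟩` and `c := a + v`. Conjugating the fixed-point
equation by `x` gives `⟨R x, x⟩ - ⟨W x, x⟩ = ⟨R z, z⟩ - b²/c`, while expanding the quadratic form
at `y = z - (b/c) F` gives `⟨R y, y⟩ = ⟨R z, z⟩ - 2b²/c + a b²/c²`. The difference is
`b² (c - a)/c² = b² v/c² ≥ 0`.
-/

open Matrix

namespace Matrix

variable {ι κ α : Type*} [Fintype ι] [Fintype κ]

section CommRing

variable [CommRing α]

lemma IsSymm.mulVec_dotProduct_comm_s3 {R : Matrix ι ι α} (hR : R.IsSymm) (u w : ι → α) :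
    (R *ᵥ u) ⬝ᵥ w = (R *ᵥ w) ⬝ᵥ u := by
  rw [dotProduct_comm, dotProduct_mulVec, ← mulVec_transpose, hR.eq]

lemma IsSymm.mulVec_sub_smul_dotProduct_s3 {R : Matrix ι ι α} (hR : R.IsSymm)
    (z F : ι → α) (t : α) :
    (R *ᵥ (z - t • F)) ⬝ᵥ (z - t • F) =
      (R *ᵥ z) ⬝ᵥ z - 2 * t * ((R *ᵥ z) ⬝ᵥ F) + t ^ 2 * ((R *ᵥ F) ⬝ᵥ F) := by
  simp only [mulVec_sub, mulVec_smul, sub_dotProduct, dotProduct_sub, dotProduct_smul,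
    smul_dotProduct, smul_eq_mul, hR.mulVec_dotProduct_comm_s3 F z]
  ring

lemma mul_mul_transpose_mulVec_dotProduct (G : Matrix κ ι α) (M : Matrix ι ι α)
    (x : κ → α) : ((G * M * Gᵀ) *ᵥ x) ⬝ᵥ x = (M *ᵥ (Gᵀ *ᵥ x)) ⬝ᵥ (Gᵀ *ᵥ x) := by
  rw [← mulVec_mulVec, ← mulVec_mulVec, dotProduct_comm, ← dotProduct_transpose_mulVec,
    dotProduct_comm]

lemma vecMulVec_self_mulVec_dotProduct (u z : ι → α) :
    (vecMulVec u u *ᵥ z) ⬝ᵥ z = (u ⬝ᵥ z) ^ 2 := by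
  rw [vecMulVec_mulVec, op_smul_eq_smul, smul_dotProduct, smul_eq_mul, ← sq]

end CommRing

lemma PosSemidef.mulVec_dotProduct_nonneg [CommRing α] [PartialOrder α] [StarRing α]
    [TrivialStar α] {M : Matrix ι ι α} (hM : M.PosSemidef) (x : ι → α) :
    0 ≤ (M *ᵥ x) ⬝ᵥ x := by
  simpa [dotProduct_comm] using hM.dotProduct_mulVec_nonneg x

lemma IsSymm.riccati_mulVec_dotProduct_sub_eq [Field α] {R G W : Matrix ι ι α} (hR : R.IsSymm)
    {F : ι → α} {v : α} (hc : (R *ᵥ F) ⬝ᵥ F + v ≠ 0)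
    (hRic : R = G * (R - (F ⬝ᵥ (R *ᵥ F) + v)⁻¹ • vecMulVec (R *ᵥ F) (R *ᵥ F)) * Gᵀ + W)
    (x : ι → α) :
    (R *ᵥ x) ⬝ᵥ x - (W *ᵥ x) ⬝ᵥ x -
        (R *ᵥ (Gᵀ *ᵥ x - ((R *ᵥ (Gᵀ *ᵥ x)) ⬝ᵥ F / ((R *ᵥ F) ⬝ᵥ F + v)) • F)) ⬝ᵥ
          (Gᵀ *ᵥ x - ((R *ᵥ (Gᵀ *ᵥ x)) ⬝ᵥ F / ((R *ᵥ F) ⬝ᵥ F + v)) • F) =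
      ((R *ᵥ (Gᵀ *ᵥ x)) ⬝ᵥ F) ^ 2 * v / ((R *ᵥ F) ⬝ᵥ F + v) ^ 2 := by
  set z := Gᵀ *ᵥ x
  have hconj : (R *ᵥ x) ⬝ᵥ x - (W *ᵥ x) ⬝ᵥ x =
      (R *ᵥ z) ⬝ᵥ z - ((R *ᵥ F) ⬝ᵥ F + v)⁻¹ * ((R *ᵥ z) ⬝ᵥ F) ^ 2 := by
    conv_lhs => rw [hRic]
    rw [add_mulVec, add_dotProduct, add_sub_cancel_right, mul_mul_transpose_mulVec_dotProduct,
      sub_mulVec, sub_dotProduct, smul_mulVec, smul_dotProduct, vecMulVec_self_mulVec_dotProduct,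
      smul_eq_mul, dotProduct_comm F, hR.mulVec_dotProduct_comm_s3 F z]
  rw [hconj, hR.mulVec_sub_smul_dotProduct_s3]
  field_simp
  ring

end Matrix

theorem stmt_3_general {n : ℕ} (R G W : Matrix (Fin n) (Fin n) ℝ)
    (F : Fin n → ℝ) (v : ℝ) (hv : 0 < v) (hR : R.PosSemidef) (hW : W.PosSemidef)
    (hRic : R = G * (R - (F ⬝ᵥ (R *ᵥ F) + v)⁻¹ • vecMulVec (R *ᵥ F) (R *ᵥ F)) * Gᵀ + W)
    (x y : Fin n → ℝ)
    (hy : y = Gᵀ *ᵥ x - (((R *ᵥ (Gᵀ *ᵥ x)) ⬝ᵥ F) / ((R *ᵥ F) ⬝ᵥ F + v)) • F) :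
    (R *ᵥ y) ⬝ᵥ y ≤ (R *ᵥ x) ⬝ᵥ x - (W *ᵥ x) ⬝ᵥ x ∧
    (R *ᵥ y) ⬝ᵥ y ≤ (R *ᵥ x) ⬝ᵥ x := by
  have hRF := hR.mulVec_dotProduct_nonneg F
  have hWx := hW.mulVec_dotProduct_nonneg x
  have hdecr := (isHermitian_iff_isSymm.mp hR.1).riccati_mulVec_dotProduct_sub_eq
    (by positivity : (R *ᵥ F) ⬝ᵥ F + v ≠ 0) hRic x
  rw [← hy] at hdecr
  have hgap : 0 ≤ ((R *ᵥ (Gᵀ *ᵥ x)) ⬝ᵥ F) ^ 2 * v / ((R *ᵥ F) ⬝ᵥ F + v) ^ 2 := by positivity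
  constructor <;> linarith

/-- If the symmetric positive semidefinite `R` satisfies the Riccati
fixed-point equation with `W` symmetric positive semidefinite, then for `x ∈ ℝⁿ` and
`y := Gᵀx − (⟨R Gᵀx, F⟩/(⟨R F, F⟩ + v))·F` one has
`⟨R y, y⟩ ≤ ⟨R x, x⟩ − ⟨W x, x⟩`; in particular `⟨R y, y⟩ ≤ ⟨R x, x⟩`. -/
theorem stmt_3 {n : ℕ} (hn : 1 ≤ n) (R G W : Matrix (Fin n) (Fin n) ℝ)
    (F : Fin n → ℝ) (v : ℝ) (hv : 0 < v) (hR : R.PosSemidef) (hW : W.PosSemidef)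
    (hRic : R = G * (R - (F ⬝ᵥ (R *ᵥ F) + v)⁻¹ • vecMulVec (R *ᵥ F) (R *ᵥ F)) * Gᵀ + W)
    (x y : Fin n → ℝ)
    (hy : y = Gᵀ *ᵥ x - (((R *ᵥ (Gᵀ *ᵥ x)) ⬝ᵥ F) / ((R *ᵥ F) ⬝ᵥ F + v)) • F) :
    (R *ᵥ y) ⬝ᵥ y ≤ (R *ᵥ x) ⬝ᵥ x - (W *ᵥ x) ⬝ᵥ x ∧
    (R *ᵥ y) ⬝ᵥ y ≤ (R *ᵥ x) ⬝ᵥ x :=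
  stmt_3_general R G W F v hv hR hW hRic x y hy
end

section
/- (Exponential decay of the iterated contraction.) Let n ≥ 1, let G be a real n×n matrix, F ∈ ℝⁿ, v > 0, W a symmetric positive definite n×n real matrix, and let R be a symmetric positive semidefinite n×n matrix satisfying the Riccati fixed-point equation R = G(R − (R F)(R F)ᵀ/(⟨F, R F⟩ + v))Gᵀ + W. Set A := R F/(⟨F, R F⟩ + v) and let P := (I − F Aᵀ)Gᵀ be the matrix of the map x ↦ Gᵀx − ⟨A, Gᵀx⟩F. Then there exists γ with 0 ≤ γ < 1 such that for every integer s ≥ 0 and every x ∈ ℝⁿ: ⟨R Pˢx, Pˢx⟩ ≤ γˢ·⟨R x, x⟩. In particular, ⟨R PˢF, PˢF⟩ ≤ γˢ·⟨R F, F⟩ and ‖PˢF‖ → 0 exponentially fast in s. -/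
/-!
The Riccati equation yields the quadratic-form identity
`⟨R x, x⟩ = ⟨R P x, P x⟩ + v ⟨A, Gᵀ x⟩² + ⟨W x, x⟩`, so `x ↦ ⟨R x, x⟩` is a Lyapunov function
for `P` that drops by at least `⟨W x, x⟩` in each step. As `W` is positive definite, compactness
of the unit sphere gives `⟨R x, x⟩ ≤ C ⟨W x, x⟩`, hence each step multiplies the Lyapunov function
by at most `C / (C + 1)`. The identity also gives `R ≥ W`, so `R` is positive definite and the
Lyapunov function dominates a multiple of `‖x‖²`.
-/

open Matrix

namespace Matrix

variable {ι : Type*} [Fintype ι]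

lemma mulVec_dotProduct_comm_of_isSymm {R : Matrix ι ι ℝ} (hR : R.IsSymm) (x y : ι → ℝ) :
    (R *ᵥ x) ⬝ᵥ y = (R *ᵥ y) ⬝ᵥ x := by
  rw [dotProduct_comm, dotProduct_mulVec, ← mulVec_transpose, hR.eq]

lemma mulVec_smul_dotProduct_smul (M : Matrix ι ι ℝ) (c : ℝ) (x : ι → ℝ) :
    (M *ᵥ (c • x)) ⬝ᵥ (c • x) = c ^ 2 * ((M *ᵥ x) ⬝ᵥ x) := by
  simp only [mulVec_smul, smul_dotProduct, dotProduct_smul, smul_eq_mul]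
  ring

lemma PosSemidef.mulVec_dotProduct_nonneg_s6 {R : Matrix ι ι ℝ} (hR : R.PosSemidef) (x : ι → ℝ) :
    0 ≤ (R *ᵥ x) ⬝ᵥ x := by
  simpa [dotProduct_comm] using hR.dotProduct_mulVec_nonneg x

lemma PosDef.mulVec_dotProduct_pos {W : Matrix ι ι ℝ} (hW : W.PosDef) {x : ι → ℝ} (hx : x ≠ 0) :
    0 < (W *ᵥ x) ⬝ᵥ x := by
  simpa [dotProduct_comm] using hW.dotProduct_mulVec_pos hx

lemma continuous_mulVec_dotProduct (M : Matrix ι ι ℝ) :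
    Continuous fun x : ι → ℝ => (M *ᵥ x) ⬝ᵥ x :=
  (continuous_const.matrix_mulVec continuous_id).dotProduct continuous_id

lemma PosDef.exists_mulVec_dotProduct_le_mul (M : Matrix ι ι ℝ) {W : Matrix ι ι ℝ}
    (hW : W.PosDef) : ∃ C, 0 ≤ C ∧ ∀ x, (M *ᵥ x) ⬝ᵥ x ≤ C * ((W *ᵥ x) ⬝ᵥ x) := by
  have hpos : ∀ u ∈ Metric.sphere (0 : ι → ℝ) 1, 0 < (W *ᵥ u) ⬝ᵥ u := fun u hu =>
    hW.mulVec_dotProduct_pos (ne_zero_of_mem_unit_sphere ⟨u, hu⟩)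
  obtain ⟨C, hC⟩ := (isCompact_sphere (0 : ι → ℝ) 1).bddAbove_image <|
    (continuous_mulVec_dotProduct M).continuousOn.div
      (continuous_mulVec_dotProduct W).continuousOn fun u hu => (hpos u hu).ne'
  refine ⟨max C 0, le_max_right C 0, fun x => ?_⟩
  refine le_trans ?_ (mul_le_mul_of_nonneg_right (le_max_left C 0)
    (hW.posSemidef.mulVec_dotProduct_nonneg_s6 x))
  rcases eq_or_ne x 0 with rfl | hx
  · simp
  set u := ‖x‖⁻¹ • x
  have hu : u ∈ Metric.sphere (0 : ι → ℝ) 1 := by simp [u, norm_smul, hx]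
  have hxu : x = ‖x‖ • u := by simp [u, smul_smul, hx]
  have hMu : (M *ᵥ u) ⬝ᵥ u ≤ C * ((W *ᵥ u) ⬝ᵥ u) :=
    (div_le_iff₀ (hpos u hu)).mp (hC ⟨u, hu, rfl⟩)
  have hscale : ∀ N : Matrix ι ι ℝ, (N *ᵥ x) ⬝ᵥ x = ‖x‖ ^ 2 * ((N *ᵥ u) ⬝ᵥ u) := fun N => by
    rw [← mulVec_smul_dotProduct_smul, ← hxu]
  rw [hscale, hscale, mul_left_comm]
  exact mul_le_mul_of_nonneg_left hMu (sq_nonneg _)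

end Matrix

section Riccati

variable {ι : Type*} [Fintype ι] [DecidableEq ι] {R G W P : Matrix ι ι ℝ} {F A : ι → ℝ} {v : ℝ}

lemma closedLoop_mulVec (hP : P = (1 - vecMulVec F A) * Gᵀ) (x : ι → ℝ) :
    P *ᵥ x = Gᵀ *ᵥ x - (A ⬝ᵥ (Gᵀ *ᵥ x)) • F := by
  rw [hP, ← mulVec_mulVec, sub_mulVec, one_mulVec, vecMulVec_mulVec, op_smul_eq_smul]

lemma riccati_mulVec_dotProduct_eq (hR : R.IsSymm)
    (hRic : R = G * (R - (F ⬝ᵥ (R *ᵥ F) + v)⁻¹ • vecMulVec (R *ᵥ F) (R *ᵥ F)) * Gᵀ + W)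
    (hA : A = (F ⬝ᵥ (R *ᵥ F) + v)⁻¹ • (R *ᵥ F)) (hP : P = (1 - vecMulVec F A) * Gᵀ)
    (x : ι → ℝ) :
    (R *ᵥ x) ⬝ᵥ x =
      (R *ᵥ (P *ᵥ x)) ⬝ᵥ (P *ᵥ x) + v * (A ⬝ᵥ (Gᵀ *ᵥ x)) ^ 2 + (W *ᵥ x) ⬝ᵥ x := by
  have hPx := closedLoop_mulVec hP x
  set c := F ⬝ᵥ (R *ᵥ F) + v
  set y := Gᵀ *ᵥ x
  set d := (R *ᵥ F) ⬝ᵥ y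
  have hAy : A ⬝ᵥ y = c⁻¹ * d := by rw [hA, smul_dotProduct, smul_eq_mul]
  have hFRF : (R *ᵥ F) ⬝ᵥ F = c - v := by rw [dotProduct_comm]; ring
  have hRyF : (R *ᵥ y) ⬝ᵥ F = d := mulVec_dotProduct_comm_of_isSymm hR y F
  have hRx : (R *ᵥ x) ⬝ᵥ x = (R *ᵥ y) ⬝ᵥ y - c⁻¹ * d ^ 2 + (W *ᵥ x) ⬝ᵥ x := by
    conv_lhs => rw [hRic]
    rw [add_mulVec, add_dotProduct, ← mulVec_mulVec, ← mulVec_mulVec, dotProduct_comm,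
      dotProduct_mulVec, ← mulVec_transpose, sub_mulVec, smul_mulVec, vecMulVec_mulVec,
      op_smul_eq_smul, dotProduct_sub, dotProduct_smul, dotProduct_smul, smul_eq_mul, smul_eq_mul,
      dotProduct_comm y (R *ᵥ y), dotProduct_comm y (R *ᵥ F)]
    ring
  have hRPx : (R *ᵥ (P *ᵥ x)) ⬝ᵥ (P *ᵥ x) =
      (R *ᵥ y) ⬝ᵥ y - 2 * c⁻¹ * d ^ 2 + (c⁻¹ * d) ^ 2 * (c - v) := by
    simp only [hPx, mulVec_sub, mulVec_smul, sub_dotProduct, dotProduct_sub,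
      smul_dotProduct, dotProduct_smul, smul_eq_mul, hAy, hRyF, hFRF]
    ring
  -- also true for `c = 0`, where `c⁻¹ = 0`
  have hc : c⁻¹ * c * c⁻¹ = c⁻¹ := by rcases eq_or_ne c 0 with h | h <;> simp [h]
  rw [hRx, hRPx, hAy]
  linear_combination (-d ^ 2) * hc

lemma riccati_lyapunov (hR : R.IsSymm) (hv : 0 ≤ v)
    (hRic : R = G * (R - (F ⬝ᵥ (R *ᵥ F) + v)⁻¹ • vecMulVec (R *ᵥ F) (R *ᵥ F)) * Gᵀ + W)
    (hA : A = (F ⬝ᵥ (R *ᵥ F) + v)⁻¹ • (R *ᵥ F)) (hP : P = (1 - vecMulVec F A) * Gᵀ)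
    (x : ι → ℝ) :
    (R *ᵥ (P *ᵥ x)) ⬝ᵥ (P *ᵥ x) + (W *ᵥ x) ⬝ᵥ x ≤ (R *ᵥ x) ⬝ᵥ x := by
  rw [riccati_mulVec_dotProduct_eq hR hRic hA hP x]
  linarith [mul_nonneg hv (sq_nonneg (A ⬝ᵥ (Gᵀ *ᵥ x)))]

end Riccati

namespace Matrix

variable {ι : Type*} [Fintype ι] {R W P : Matrix ι ι ℝ}

lemma PosSemidef.posDef_of_lyapunov (hR : R.PosSemidef) (hW : W.PosDef)
    (h : ∀ x, (R *ᵥ (P *ᵥ x)) ⬝ᵥ (P *ᵥ x) + (W *ᵥ x) ⬝ᵥ x ≤ (R *ᵥ x) ⬝ᵥ x) : R.PosDef := by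
  refine PosDef.of_dotProduct_mulVec_pos hR.1 fun x hx => ?_
  rw [star_trivial, dotProduct_comm]
  linarith [h x, hR.mulVec_dotProduct_nonneg_s6 (P *ᵥ x), hW.mulVec_dotProduct_pos hx]

lemma PosDef.exists_contraction_of_lyapunov (hW : W.PosDef)
    (h : ∀ x, (R *ᵥ (P *ᵥ x)) ⬝ᵥ (P *ᵥ x) + (W *ᵥ x) ⬝ᵥ x ≤ (R *ᵥ x) ⬝ᵥ x) :
    ∃ γ, 0 ≤ γ ∧ γ < 1 ∧ ∀ x, (R *ᵥ (P *ᵥ x)) ⬝ᵥ (P *ᵥ x) ≤ γ * ((R *ᵥ x) ⬝ᵥ x) := by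
  obtain ⟨C, hC0, hC⟩ := hW.exists_mulVec_dotProduct_le_mul R
  refine ⟨C / (C + 1), by positivity, (div_lt_one (by positivity)).mpr (lt_add_one C),
    fun x => ?_⟩
  have hWx : 0 ≤ (W *ᵥ x) ⬝ᵥ x := hW.posSemidef.mulVec_dotProduct_nonneg_s6 x
  rw [div_mul_eq_mul_div, le_div_iff₀ (by positivity)]
  linarith [mul_le_mul_of_nonneg_left (h x) (by positivity : (0 : ℝ) ≤ C + 1), hC x]

lemma mulVec_pow_dotProduct_le [DecidableEq ι] {γ : ℝ} (hγ : 0 ≤ γ)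
    (h : ∀ x, (R *ᵥ (P *ᵥ x)) ⬝ᵥ (P *ᵥ x) ≤ γ * ((R *ᵥ x) ⬝ᵥ x)) (s : ℕ) (x : ι → ℝ) :
    (R *ᵥ (P ^ s *ᵥ x)) ⬝ᵥ (P ^ s *ᵥ x) ≤ γ ^ s * ((R *ᵥ x) ⬝ᵥ x) := by
  induction s generalizing x with
  | zero => simp
  | succ s ih =>
    calc (R *ᵥ (P ^ (s + 1) *ᵥ x)) ⬝ᵥ (P ^ (s + 1) *ᵥ x)
        = (R *ᵥ (P ^ s *ᵥ (P *ᵥ x))) ⬝ᵥ (P ^ s *ᵥ (P *ᵥ x)) := by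
          rw [pow_succ, ← mulVec_mulVec]
      _ ≤ γ ^ s * ((R *ᵥ (P *ᵥ x)) ⬝ᵥ (P *ᵥ x)) := ih (P *ᵥ x)
      _ ≤ γ ^ s * (γ * ((R *ᵥ x) ⬝ᵥ x)) := by gcongr; exact h x
      _ = γ ^ (s + 1) * ((R *ᵥ x) ⬝ᵥ x) := by ring

lemma sqrt_dotProduct_le_of_mulVec_dotProduct_le {C γ b : ℝ} (hC0 : 0 ≤ C)
    (hC : ∀ x, x ⬝ᵥ x ≤ C * ((R *ᵥ x) ⬝ᵥ x)) (hγ : 0 ≤ γ) (hb : 0 ≤ b) {s : ℕ} {y : ι → ℝ}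
    (h : (R *ᵥ y) ⬝ᵥ y ≤ γ ^ s * b) : √(y ⬝ᵥ y) ≤ √(C * b) * √γ ^ s := by
  rw [Real.sqrt_le_iff]
  refine ⟨by positivity, ?_⟩
  rw [mul_pow, ← pow_mul, mul_comm s, pow_mul, Real.sq_sqrt (mul_nonneg hC0 hb),
    Real.sq_sqrt hγ]
  calc y ⬝ᵥ y ≤ C * ((R *ᵥ y) ⬝ᵥ y) := hC y
    _ ≤ C * (γ ^ s * b) := mul_le_mul_of_nonneg_left h hC0
    _ = C * b * γ ^ s := by ring

end Matrix

theorem stmt_6_general {n : ℕ} (R G W : Matrix (Fin n) (Fin n) ℝ)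
    (F : Fin n → ℝ) (v : ℝ) (hv : 0 < v) (hR : R.PosSemidef) (hW : W.PosDef)
    (hRic : R = G * (R - (F ⬝ᵥ (R *ᵥ F) + v)⁻¹ • vecMulVec (R *ᵥ F) (R *ᵥ F)) * Gᵀ + W)
    (A : Fin n → ℝ) (hA : A = (F ⬝ᵥ (R *ᵥ F) + v)⁻¹ • (R *ᵥ F))
    (P : Matrix (Fin n) (Fin n) ℝ) (hP : P = (1 - vecMulVec F A) * Gᵀ) :
    ∃ γ : ℝ, 0 ≤ γ ∧ γ < 1 ∧
      (∀ (s : ℕ) (x : Fin n → ℝ),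
        (R *ᵥ (P ^ s *ᵥ x)) ⬝ᵥ (P ^ s *ᵥ x) ≤ γ ^ s * ((R *ᵥ x) ⬝ᵥ x)) ∧
      (∀ s : ℕ, (R *ᵥ (P ^ s *ᵥ F)) ⬝ᵥ (P ^ s *ᵥ F) ≤ γ ^ s * ((R *ᵥ F) ⬝ᵥ F)) ∧
      ∃ c ρ : ℝ, 0 ≤ c ∧ 0 ≤ ρ ∧ ρ < 1 ∧
        ∀ s : ℕ, Real.sqrt ((P ^ s *ᵥ F) ⬝ᵥ (P ^ s *ᵥ F)) ≤ c * ρ ^ s := by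
  have hlyap := riccati_lyapunov (isHermitian_iff_isSymm.mp hR.1) hv.le hRic hA hP
  obtain ⟨γ, hγ0, hγ1, hcontr⟩ := hW.exists_contraction_of_lyapunov hlyap
  have hdecay := mulVec_pow_dotProduct_le hγ0 hcontr
  have hRpos := hR.posDef_of_lyapunov hW hlyap
  obtain ⟨C, hC0, hC⟩ := hRpos.exists_mulVec_dotProduct_le_mul 1
  simp only [one_mulVec] at hC
  refine ⟨γ, hγ0, hγ1, hdecay, fun s => hdecay s F, √(C * ((R *ᵥ F) ⬝ᵥ F)), √γ,
    Real.sqrt_nonneg _, Real.sqrt_nonneg _, (Real.sqrt_lt' one_pos).mpr (by simpa using hγ1),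
    fun s => ?_⟩
  exact sqrt_dotProduct_le_of_mulVec_dotProduct_le hC0 hC hγ0
    (hRpos.posSemidef.mulVec_dotProduct_nonneg_s6 F) (hdecay s F)

/-- Exponential decay of the iterated contraction: With `R` a symmetric
positive semidefinite solution of the Riccati fixed-point equation, `W` symmetric
positive definite, `A := R F/(⟨F, R F⟩ + v)` and `P := (I − F Aᵀ)Gᵀ`, there is
`γ ∈ [0,1)` with `⟨R Pˢx, Pˢx⟩ ≤ γˢ·⟨R x, x⟩` for all `s` and `x`; in particular
`⟨R PˢF, PˢF⟩ ≤ γˢ·⟨R F, F⟩`, and the Euclidean norm `‖PˢF‖` decays exponentially. -/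
theorem stmt_6 {n : ℕ} (hn : 1 ≤ n) (R G W : Matrix (Fin n) (Fin n) ℝ)
    (F : Fin n → ℝ) (v : ℝ) (hv : 0 < v) (hR : R.PosSemidef) (hW : W.PosDef)
    (hRic : R = G * (R - (F ⬝ᵥ (R *ᵥ F) + v)⁻¹ • vecMulVec (R *ᵥ F) (R *ᵥ F)) * Gᵀ + W)
    (A : Fin n → ℝ) (hA : A = (F ⬝ᵥ (R *ᵥ F) + v)⁻¹ • (R *ᵥ F))
    (P : Matrix (Fin n) (Fin n) ℝ) (hP : P = (1 - vecMulVec F A) * Gᵀ) :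
    ∃ γ : ℝ, 0 ≤ γ ∧ γ < 1 ∧
      (∀ (s : ℕ) (x : Fin n → ℝ),
        (R *ᵥ (P ^ s *ᵥ x)) ⬝ᵥ (P ^ s *ᵥ x) ≤ γ ^ s * ((R *ᵥ x) ⬝ᵥ x)) ∧
      (∀ s : ℕ, (R *ᵥ (P ^ s *ᵥ F)) ⬝ᵥ (P ^ s *ᵥ F) ≤ γ ^ s * ((R *ᵥ F) ⬝ᵥ F)) ∧
      ∃ c ρ : ℝ, 0 ≤ c ∧ 0 ≤ ρ ∧ ρ < 1 ∧
        ∀ s : ℕ, Real.sqrt ((P ^ s *ᵥ F) ⬝ᵥ (P ^ s *ᵥ F)) ≤ c * ρ ^ s :=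
  stmt_6_general R G W F v hv hR hW hRic A hA P hP
end

section
/- (Exponential decay of the limit AR coefficients.) Let n ≥ 1, let G be a real n×n matrix, F ∈ ℝⁿ, v > 0, W a symmetric positive definite n×n real matrix, and let R be a symmetric positive semidefinite n×n matrix satisfying the Riccati fixed-point equation R = G(R − (R F)(R F)ᵀ/(⟨F, R F⟩ + v))Gᵀ + W. Set A := R F/(⟨F, R F⟩ + v) and Z := G(I − A Fᵀ). Then there exist c ≥ 0 and ρ with 0 ≤ ρ < 1 such that for every integer j ≥ 0, the coefficient θ_j := ⟨F, Zʲ G A⟩ satisfies |θ_j| ≤ c·ρʲ. -/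
/-!
With `s = ⟨F, R F⟩ + v`, inserting the Joseph form `R - s AAᵀ = (I - AFᵀ) R (I - AFᵀ)ᵀ + v AAᵀ`
of the Kalman covariance update into the Riccati equation gives the Lyapunov identity `R = Z R Zᵀ + v (GA)(GA)ᵀ + W`.
As `W` is positive definite, `δ R ≤ W` for some `δ > 0`, so `Z R Zᵀ ≤ ρ R` with `ρ < 1` and
hence `Zʲ R (Zʲ)ᵀ ≤ ρʲ R`. Conjugating `v (GA)(GA)ᵀ ≤ R` by `Zʲ` and evaluating the quadratic
form at `F` yields `v θⱼ² ≤ ρʲ ⟨F, R F⟩`.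
-/

open Matrix
open scoped MatrixOrder

namespace Matrix

variable {ι : Type*} [Fintype ι]

section CommRing

variable {K : Type*} [CommRing K]

theorem mul_vecMulVec_mul_transpose {κ : Type*} [Fintype κ] (Z : Matrix κ ι K) (a b : ι → K) :
    Z * vecMulVec a b * Zᵀ = vecMulVec (Z *ᵥ a) (Z *ᵥ b) := by
  rw [mul_vecMulVec, vecMulVec_mul, vecMul_transpose]

theorem dotProduct_vecMulVec_self_mulVec (a x : ι → K) :
    x ⬝ᵥ (vecMulVec a a *ᵥ x) = (a ⬝ᵥ x) ^ 2 := by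
  rw [vecMulVec_mulVec, op_smul_eq_smul, dotProduct_smul, dotProduct_comm, smul_eq_mul, sq]

-- The Joseph form of the Kalman covariance update.
theorem one_sub_vecMulVec_mul_mul_transpose_add [DecidableEq ι] {R : Matrix ι ι K}
    (hR : Rᵀ = R) {F A : ι → K} {v : K} (hA : R *ᵥ F = (F ⬝ᵥ (R *ᵥ F) + v) • A) :
    (1 - vecMulVec A F) * R * (1 - vecMulVec A F)ᵀ + v • vecMulVec A A =
      R - (F ⬝ᵥ (R *ᵥ F) + v) • vecMulVec A A := by
  set s := F ⬝ᵥ (R *ᵥ F) + v with hs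
  have hFR : F ᵥ* R = s • A := by rw [← hA, ← vecMul_transpose, hR]
  have hsAF : s * (A ⬝ᵥ F) = s - v := by
    rw [dotProduct_comm, ← smul_eq_mul, ← dotProduct_smul, ← hA, hs, add_sub_cancel_right]
  simp only [transpose_sub, transpose_one, transpose_vecMulVec, sub_mul, mul_sub, one_mul,
    mul_one, vecMulVec_mul, mul_vecMulVec, hFR, hA, vecMulVec_smul, smul_vecMulVec, smul_mulVec,
    vecMulVec_mulVec, op_smul_eq_smul, smul_smul, hsAF]
  module

end CommRing

theorem eq_mul_mul_transpose_add_of_riccati {K : Type*} [Field K] [DecidableEq ι]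
    {R G W : Matrix ι ι K} {F A : ι → K} {v : K} (hR : Rᵀ = R) (hs : F ⬝ᵥ (R *ᵥ F) + v ≠ 0)
    (hRic : R = G * (R - (F ⬝ᵥ (R *ᵥ F) + v)⁻¹ • vecMulVec (R *ᵥ F) (R *ᵥ F)) * Gᵀ + W)
    (hA : A = (F ⬝ᵥ (R *ᵥ F) + v)⁻¹ • (R *ᵥ F)) :
    R = G * (1 - vecMulVec A F) * R * (G * (1 - vecMulVec A F))ᵀ +
      v • vecMulVec (G *ᵥ A) (G *ᵥ A) + W := by
  set s := F ⬝ᵥ (R *ᵥ F) + v with hs_def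
  have hRA : R *ᵥ F = s • A := by rw [hA, smul_smul, mul_inv_cancel₀ hs, one_smul]
  have hJ := one_sub_vecMulVec_mul_mul_transpose_add hR hRA
  rw [← hs_def] at hJ
  conv_lhs => rw [hRic]
  rw [hRA, smul_vecMulVec, vecMulVec_smul, smul_smul, inv_mul_cancel₀ hs, one_smul, ← hJ,
    Matrix.mul_add, Matrix.add_mul, mul_smul_comm, smul_mul_assoc, mul_vecMulVec_mul_transpose,
    transpose_mul]
  simp only [Matrix.mul_assoc]

theorem dotProduct_mulVec_le_of_le {M N : Matrix ι ι ℝ} (h : M ≤ N) (x : ι → ℝ) :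
    x ⬝ᵥ (M *ᵥ x) ≤ x ⬝ᵥ (N *ᵥ x) := by
  have := (le_iff.1 h).dotProduct_mulVec_nonneg x
  rw [star_trivial, sub_mulVec, dotProduct_sub] at this
  linarith

theorem mul_mul_transpose_le_mul_mul_transpose {κ : Type*} [Fintype κ] {M N : Matrix ι ι ℝ}
    (h : M ≤ N) (Z : Matrix κ ι ℝ) : Z * M * Zᵀ ≤ Z * N * Zᵀ := by
  rw [le_iff, ← Matrix.sub_mul, ← Matrix.mul_sub, ← conjTranspose_eq_transpose_of_trivial]
  exact (le_iff.1 h).mul_mul_conjTranspose_same Z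

theorem mul_sq_dotProduct_mulVec_le {R Y : Matrix ι ι ℝ} {w : ι → ℝ} {v c : ℝ}
    (hw : v • vecMulVec w w ≤ R) (hY : Y * R * Yᵀ ≤ c • R) (x : ι → ℝ) :
    v * (x ⬝ᵥ (Y *ᵥ w)) ^ 2 ≤ c * (x ⬝ᵥ (R *ᵥ x)) := by
  have := dotProduct_mulVec_le_of_le ((mul_mul_transpose_le_mul_mul_transpose hw Y).trans hY) x
  rwa [mul_smul_comm, smul_mul_assoc, mul_vecMulVec_mul_transpose, smul_mulVec, smul_mulVec,
    dotProduct_smul, dotProduct_smul, dotProduct_vecMulVec_self_mulVec, dotProduct_comm,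
    smul_eq_mul, smul_eq_mul] at this

variable [DecidableEq ι]

theorem PosDef.exists_pos_smul_le {W : Matrix ι ι ℝ} (hW : W.PosDef) {R : Matrix ι ι ℝ}
    (hR : R.IsHermitian) : ∃ δ : ℝ, 0 < δ ∧ δ • R ≤ W := by
  cases isEmpty_or_nonempty ι
  · exact ⟨1, one_pos, (Subsingleton.elim _ _).le⟩
  obtain ⟨ε, hε, hεW⟩ : ∃ ε > 0, algebraMap ℝ _ ε ≤ W :=
    (CFC.exists_pos_algebraMap_le_iff hW.isHermitian.isSelfAdjoint).2
      fun x hx => (isStrictlyPositive_iff_posDef.2 hW).spectrum_pos hx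
  obtain ⟨K, hK⟩ := (finite_real_spectrum (A := R)).bddAbove
  have hRK : R ≤ algebraMap ℝ _ K := (le_algebraMap_iff_spectrum_le hR.isSelfAdjoint).2 hK
  have hK₁ : 0 < max K 1 := lt_max_of_lt_right one_pos
  refine ⟨ε / max K 1, div_pos hε hK₁, ?_⟩
  calc (ε / max K 1) • R ≤ (ε / max K 1) • (max K 1 • (1 : Matrix ι ι ℝ)) := by
        refine smul_le_smul_of_nonneg_left (hRK.trans ?_) (div_pos hε hK₁).le
        rw [Algebra.algebraMap_eq_smul_one]
        exact smul_le_smul_of_nonneg_right (le_max_left K 1) zero_le_one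
    _ = algebraMap ℝ _ ε := by
        rw [smul_smul, div_mul_cancel₀ ε hK₁.ne', Algebra.algebraMap_eq_smul_one]
    _ ≤ W := hεW

theorem exists_pow_mul_mul_transpose_pow_le {R W Z : Matrix ι ι ℝ} (hR : R.PosSemidef)
    (hW : W.PosDef) (h : Z * R * Zᵀ + W ≤ R) :
    ∃ ρ : ℝ, 0 ≤ ρ ∧ ρ < 1 ∧ ∀ j : ℕ, Z ^ j * R * (Z ^ j)ᵀ ≤ ρ ^ j • R := by
  obtain ⟨δ, hδ, hδW⟩ := hW.exists_pos_smul_le hR.isHermitian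
  set ρ := max (1 - δ) 0
  have hstep : Z * R * Zᵀ ≤ ρ • R := calc
    Z * R * Zᵀ ≤ (1 - δ) • R := by
      rw [sub_smul, one_smul, le_sub_iff_add_le]
      exact (add_le_add_right hδW _).trans h
    _ ≤ ρ • R := smul_le_smul_of_nonneg_right (le_max_left _ _) (nonneg_iff_posSemidef.2 hR)
  refine ⟨ρ, le_max_right _ _, max_lt (sub_lt_self 1 hδ) one_pos, fun j => ?_⟩
  induction j with
  | zero => simp
  | succ j ih => calc
      Z ^ (j + 1) * R * (Z ^ (j + 1))ᵀ = Z ^ j * (Z * R * Zᵀ) * (Z ^ j)ᵀ := by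
        simp only [pow_succ, transpose_mul, Matrix.mul_assoc]
      _ ≤ Z ^ j * (ρ • R) * (Z ^ j)ᵀ := mul_mul_transpose_le_mul_mul_transpose hstep _
      _ = ρ • (Z ^ j * R * (Z ^ j)ᵀ) := by rw [mul_smul_comm, smul_mul_assoc]
      _ ≤ ρ • ρ ^ j • R := smul_le_smul_of_nonneg_left ih (le_max_right _ _)
      _ = ρ ^ (j + 1) • R := by rw [smul_smul, pow_succ']

end Matrix

theorem abs_le_sqrt_mul_sqrt_pow_of_sq_le {θ : ℕ → ℝ} {C ρ : ℝ} (hC : 0 ≤ C) (hρ : 0 ≤ ρ)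
    (h : ∀ j, θ j ^ 2 ≤ C * ρ ^ j) (j : ℕ) : |θ j| ≤ √C * √ρ ^ j := by
  refine abs_le_of_sq_le_sq ?_ (by positivity)
  rw [mul_pow, pow_right_comm, Real.sq_sqrt hC, Real.sq_sqrt hρ]
  exact h j

theorem stmt_7_general {n : ℕ} (R G W : Matrix (Fin n) (Fin n) ℝ)
    (F : Fin n → ℝ) (v : ℝ) (hv : 0 < v) (hR : R.PosSemidef) (hW : W.PosDef)
    (hRic : R = G * (R - (F ⬝ᵥ (R *ᵥ F) + v)⁻¹ • vecMulVec (R *ᵥ F) (R *ᵥ F)) * Gᵀ + W)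
    (A : Fin n → ℝ) (hA : A = (F ⬝ᵥ (R *ᵥ F) + v)⁻¹ • (R *ᵥ F))
    (Z : Matrix (Fin n) (Fin n) ℝ) (hZ : Z = G * (1 - vecMulVec A F)) :
    ∃ c ρ : ℝ, 0 ≤ c ∧ 0 ≤ ρ ∧ ρ < 1 ∧
      ∀ j : ℕ, |F ⬝ᵥ (Z ^ j *ᵥ (G *ᵥ A))| ≤ c * ρ ^ j := by
  have hFRF : 0 ≤ F ⬝ᵥ (R *ᵥ F) := by simpa using hR.dotProduct_mulVec_nonneg F
  have hLyap : R = Z * R * Zᵀ + v • vecMulVec (G *ᵥ A) (G *ᵥ A) + W := hZ ▸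
    eq_mul_mul_transpose_add_of_riccati (by simpa using hR.isHermitian.eq) (by positivity) hRic hA
  set w := G *ᵥ A
  have hZRZ : 0 ≤ Z * R * Zᵀ := by
    simpa [nonneg_iff_posSemidef, conjTranspose_eq_transpose_of_trivial]
      using hR.mul_mul_conjTranspose_same Z
  have hw : 0 ≤ v • vecMulVec w w := by
    simpa [nonneg_iff_posSemidef] using (posSemidef_vecMulVec_self_star w).smul hv.le
  have hW0 : 0 ≤ W := nonneg_iff_posSemidef.2 hW.posSemidef
  obtain ⟨ρ, hρ0, hρ1, hdecay⟩ := exists_pow_mul_mul_transpose_pow_le hR hW <| calc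
    Z * R * Zᵀ + W ≤ Z * R * Zᵀ + v • vecMulVec w w + W := by
      gcongr; exact le_add_of_nonneg_right hw
    _ = R := hLyap.symm
  have hwR : v • vecMulVec w w ≤ R := calc
    _ ≤ Z * R * Zᵀ + v • vecMulVec w w + W :=
      le_add_of_le_of_nonneg (le_add_of_nonneg_left hZRZ) hW0
    _ = R := hLyap.symm
  have hθ (j : ℕ) : (F ⬝ᵥ (Z ^ j *ᵥ w)) ^ 2 ≤ (F ⬝ᵥ (R *ᵥ F) / v) * ρ ^ j := by
    have := mul_sq_dotProduct_mulVec_le hwR (hdecay j) F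
    rw [div_mul_eq_mul_div, le_div_iff₀ hv]
    linarith
  exact ⟨_, _, Real.sqrt_nonneg _, Real.sqrt_nonneg _,
    (Real.sqrt_lt' one_pos).2 (by simpa using hρ1),
    abs_le_sqrt_mul_sqrt_pow_of_sq_le (by positivity) hρ0 hθ⟩

/-- Exponential decay of the limit AR coefficients: With `R` a symmetric
positive semidefinite solution of the Riccati fixed-point equation, `W` symmetric
positive definite, `A := R F/(⟨F, R F⟩ + v)` and `Z := G(I − A Fᵀ)`, there exist
`c ≥ 0` and `ρ ∈ [0,1)` such that `|θ_j| = |⟨F, Zʲ G A⟩| ≤ c·ρʲ` for all `j ≥ 0`. -/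
theorem stmt_7 {n : ℕ} (hn : 1 ≤ n) (R G W : Matrix (Fin n) (Fin n) ℝ)
    (F : Fin n → ℝ) (v : ℝ) (hv : 0 < v) (hR : R.PosSemidef) (hW : W.PosDef)
    (hRic : R = G * (R - (F ⬝ᵥ (R *ᵥ F) + v)⁻¹ • vecMulVec (R *ᵥ F) (R *ᵥ F)) * Gᵀ + W)
    (A : Fin n → ℝ) (hA : A = (F ⬝ᵥ (R *ᵥ F) + v)⁻¹ • (R *ᵥ F))
    (Z : Matrix (Fin n) (Fin n) ℝ) (hZ : Z = G * (1 - vecMulVec A F)) :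
    ∃ c ρ : ℝ, 0 ≤ c ∧ 0 ≤ ρ ∧ ρ < 1 ∧
      ∀ j : ℕ, |F ⬝ᵥ (Z ^ j *ᵥ (G *ᵥ A))| ≤ c * ρ ^ j :=
  stmt_7_general R G W F v hv hR hW hRic A hA Z hZ
end

section
/- (Remainder-term bound, bounded case.) Consider the Kalman filter recursions for (G, F, v, W): n ≥ 1, G a real n×n matrix, F ∈ ℝⁿ, v > 0, W a symmetric positive definite n×n matrix; given a symmetric positive semidefinite initial covariance C_0, define for t ≥ 1: R_t = G C_{t−1} Gᵀ + W, Q_t = ⟨F, R_t F⟩ + v, A_t = R_t F/Q_t, C_t = R_t − Q_t A_t A_tᵀ, and Z_t = G(I − A_t Fᵀ). Assume R_t converges (entrywise) as t → ∞ to a symmetric positive semidefinite matrix R satisfying the Riccati fixed-point equation R = G(R − (R F)(R F)ᵀ/(⟨F, R F⟩ + v))Gᵀ + W. Fix a_1 ∈ ℝⁿ and B_0 > 0. Then there exist ρ' with 0 < ρ' < 1 and c ≥ 0 such that: for every real sequence (Y_t)_{t≥0} with |Y_t| ≤ B_0 for all t, defining a_{t+1} = Y_t·G A_t + Z_t a_t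 for t ≥ 1, one has for all integers s > 0 and t > s: |⟨F, (Z_t Z_{t−1} ⋯ Z_{t−s})·a_{t−s}⟩| ≤ (ρ')ˢ·c. -/
open Matrix Filter Topology BigOperators

/-!
Writing `Z = G (I - A Fᵀ)` for the limiting closed-loop matrix, the Riccati equation is
equivalent to the Lyapunov identity `R = Z R Zᵀ + v (G A)(G A)ᵀ + W`, so `R` is positive definite
and `R - Z R Zᵀ` is too. Factoring `R = L Lᵀ`, this makes `L⁻¹ Z L` a strict contraction for
the Euclidean operator norm. Since `Z_t → Z`, the conjugated matrices `L⁻¹ Z_t L` are contractions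
with a uniform constant `ρ < 1` from some time `T` on, and are uniformly bounded before; so their
products decay like `ρ ^ s` and the bounded-input recursion for `L⁻¹ a_t` stays bounded.
-/

open WithLp (toLp)

theorem exists_le_of_tendsto_lt_one {c : ℕ → ℝ} {c₀ : ℝ} (hc : Tendsto c atTop (𝓝 c₀))
    (hc₀ : c₀ < 1) :
    ∃ ρ K : ℝ, ∃ T : ℕ, 0 < ρ ∧ ρ < 1 ∧ 1 ≤ K ∧ (∀ t, c t ≤ K) ∧ ∀ t, T ≤ t → c t ≤ ρ := by
  obtain ⟨K, hK⟩ := hc.bddAbove_range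
  obtain ⟨T, hT⟩ := eventually_atTop.1 <|
    hc.eventually (gt_mem_nhds (show c₀ < (1 + max c₀ 0) / 2 by
      linarith [le_max_left c₀ 0, max_lt hc₀ one_pos]))
  refine ⟨(1 + max c₀ 0) / 2, max K 1, T, by positivity, by linarith [max_lt hc₀ one_pos],
    le_max_right _ _, fun t => (hK ⟨t, rfl⟩).trans (le_max_left _ _), fun t ht => (hT t ht).le⟩

theorem le_of_le_add_mul {x c : ℕ → ℝ} {x₀ B K ρ : ℝ} {T : ℕ} (hx₀ : 0 ≤ x₀) (hB : 0 ≤ B)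
    (hK : 1 ≤ K) (hρ : ρ < 1) (hc : ∀ t, 0 ≤ c t) (hcK : ∀ t, c t ≤ K)
    (hcρ : ∀ t, T ≤ t → c t ≤ ρ) (hx1 : x 1 ≤ x₀)
    (hx : ∀ t, 1 ≤ t → x (t + 1) ≤ B + c t * x t) {t : ℕ} (ht : 1 ≤ t) :
    x t ≤ K ^ T * (x₀ + T * B) + B / (1 - ρ) := by
  have hK₀ : 0 ≤ K := zero_le_one.trans hK
  have hB' : 0 ≤ B / (1 - ρ) := div_nonneg hB (by linarith)
  have early : ∀ m : ℕ, x (m + 1) ≤ K ^ m * (x₀ + m * B) := by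
    intro m
    induction m with
    | zero => simpa using hx1
    | succ m ih =>
      have hy : 0 ≤ K ^ m * (x₀ + m * B) := by positivity
      calc x (m + 1 + 1) ≤ B + c (m + 1) * x (m + 1) := hx _ (by omega)
        _ ≤ B + K * (K ^ m * (x₀ + m * B)) := add_le_add_right
          ((mul_le_mul_of_nonneg_left ih (hc _)).trans (mul_le_mul_of_nonneg_right (hcK _) hy)) B
        _ = K ^ (m + 1) * (x₀ + m * B) + B := by ring
        _ ≤ K ^ (m + 1) * (x₀ + m * B) + K ^ (m + 1) * B := by
          gcongr
          exact le_mul_of_one_le_left hB (one_le_pow₀ hK)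
        _ = K ^ (m + 1) * (x₀ + (m + 1 : ℕ) * B) := by push_cast; ring
  set M := K ^ T * (x₀ + T * B) + B / (1 - ρ)
  have hM : 0 ≤ M := by positivity
  have late : ∀ m, T ≤ m → x (m + 1) ≤ M := by
    intro m hm
    induction m, hm using Nat.le_induction with
    | base => exact (early T).trans (le_add_of_nonneg_right hB')
    | succ m hm ih =>
      calc x (m + 1 + 1) ≤ B + c (m + 1) * x (m + 1) := hx _ (by omega)
        _ ≤ B + ρ * M := add_le_add_right ((mul_le_mul_of_nonneg_left ih (hc _)).trans
          (mul_le_mul_of_nonneg_right (hcρ _ (by omega)) hM)) B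
        _ ≤ M := by
          have h1 : (1 - ρ) * (B / (1 - ρ)) = B := mul_div_cancel₀ _ (by linarith)
          have h2 : 0 ≤ (1 - ρ) * (K ^ T * (x₀ + T * B)) := by
            have : 0 < 1 - ρ := by linarith
            positivity
          linarith
  obtain ⟨m, rfl⟩ : ∃ m, t = m + 1 := ⟨t - 1, by omega⟩
  rcases le_total m T with hm | hm
  · calc x (m + 1) ≤ K ^ m * (x₀ + m * B) := early m
      _ ≤ K ^ T * (x₀ + T * B) := by gcongr
      _ ≤ M := le_add_of_nonneg_right hB'
  · exact late m hm

section Monoid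

variable {M : Type*} [Monoid M]

theorem List.prod_map_mul_mul_of_mul_eq_one {a b : M} (h : b * a = 1) {l : List M}
    (hl : l ≠ []) : (l.map fun x => a * x * b).prod = a * l.prod * b := by
  induction l with
  | nil => exact absurd rfl hl
  | cons x l ih =>
    rcases eq_or_ne l [] with rfl | hl'
    · simp
    rw [List.map_cons, List.prod_cons, ih hl', List.prod_cons]
    simp only [mul_assoc]
    rw [← mul_assoc b, h, one_mul]

theorem list_prod_map_range_succ_sub (z : ℕ → M) (s t : ℕ) :
    ((List.range (s + 2)).map fun i => z (t - i)).prod =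
      z t * ((List.range (s + 1)).map fun i => z (t - 1 - i)).prod := by
  rw [List.range_succ_eq_map, List.map_cons, List.prod_cons, List.map_map, Nat.sub_zero]
  congr 3
  funext i
  simp [Nat.sub_sub, Nat.add_comm]

end Monoid

section ContractingProducts

variable {A : Type*} [NormedRing A] {z : ℕ → A} {K ρ : ℝ}

theorem norm_list_prod_map_range_sub_le_pow (hK : ∀ t, ‖z t‖ ≤ K) (s t : ℕ) :
    ‖((List.range (s + 1)).map fun i => z (t - i)).prod‖ ≤ K ^ (s + 1) := by
  induction s generalizing t with
  | zero => simpa using hK t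
  | succ s ih =>
    rw [list_prod_map_range_succ_sub, pow_succ']
    exact (norm_mul_le _ _).trans <|
      mul_le_mul (hK t) (ih (t - 1)) (norm_nonneg _) ((norm_nonneg _).trans (hK t))

theorem norm_list_prod_map_range_sub_le {T : ℕ} (hρ : 0 < ρ) (hρK : ρ ≤ K)
    (hK : ∀ t, ‖z t‖ ≤ K) (hT : ∀ t, T ≤ t → ‖z t‖ ≤ ρ) {s t : ℕ} (hst : s ≤ t) :
    ‖((List.range (s + 1)).map fun i => z (t - i)).prod‖ ≤ (K / ρ) ^ T * ρ ^ (s + 1) := by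
  have hKρ : 1 ≤ K / ρ := (one_le_div hρ).2 hρK
  have early : ∀ s t, s < T →
      ‖((List.range (s + 1)).map fun i => z (t - i)).prod‖ ≤ (K / ρ) ^ T * ρ ^ (s + 1) :=
    fun s t hs => calc
      _ ≤ K ^ (s + 1) := norm_list_prod_map_range_sub_le_pow hK s t
      _ = (K / ρ) ^ (s + 1) * ρ ^ (s + 1) := by rw [← mul_pow, div_mul_cancel₀ _ hρ.ne']
      _ ≤ (K / ρ) ^ T * ρ ^ (s + 1) := by gcongr; exact hs
  induction s generalizing t with
  | zero =>
    rcases lt_or_ge t T with ht | ht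
    · exact early 0 t (by omega)
    · simpa using (hT t ht).trans (le_mul_of_one_le_left hρ.le (one_le_pow₀ hKρ))
  | succ s ih =>
    rcases lt_or_ge t T with ht | ht
    · exact early (s + 1) t (by omega)
    rw [list_prod_map_range_succ_sub, pow_succ', mul_left_comm]
    exact (norm_mul_le _ _).trans <|
      mul_le_mul (hT t ht) (ih (by omega)) (norm_nonneg _) hρ.le

end ContractingProducts

theorem ContinuousLinearMap.norm_lt_one_of_norm_apply_lt {E F : Type*} [NormedAddCommGroup E]
    [NormedSpace ℝ E] [FiniteDimensional ℝ E] [SeminormedAddCommGroup F] [NormedSpace ℝ F]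
    (f : E →L[ℝ] F) (hf : ∀ x ≠ 0, ‖f x‖ < ‖x‖) : ‖f‖ < 1 := by
  rcases subsingleton_or_nontrivial E with hE | hE
  · rw [Subsingleton.elim f 0, norm_zero]
    exact one_pos
  have := FiniteDimensional.proper_real E
  have hcpt : IsCompact ((fun x => ‖f x‖) '' Metric.sphere (0 : E) 1) :=
    (isCompact_sphere 0 1).image (by fun_prop)
  obtain ⟨x, hx, hfx⟩ := hcpt.sSup_mem ((NormedSpace.sphere_nonempty.2 zero_le_one).image _)
  rw [f.sSup_sphere_eq_norm] at hfx
  rw [← hfx, ← mem_sphere_zero_iff_norm.1 hx]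
  exact hf x (ne_zero_of_mem_unit_sphere ⟨x, hx⟩)

namespace Matrix

open scoped Matrix.Norms.L2Operator

variable {n : Type*} [Fintype n] [DecidableEq n]

omit [DecidableEq n] in
theorem abs_dotProduct_le_norm_toLp_mul (x y : n → ℝ) :
    |x ⬝ᵥ y| ≤ ‖toLp 2 x‖ * ‖toLp 2 y‖ := by
  simpa [EuclideanSpace.inner_toLp_toLp, dotProduct_comm] using
    abs_real_inner_le_norm (toLp 2 x) (toLp 2 y)

theorem norm_toLp_mulVec_le (M : Matrix n n ℝ) (x : n → ℝ) :
    ‖toLp 2 (M *ᵥ x)‖ ≤ ‖M‖ * ‖toLp 2 x‖ :=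
  M.l2_opNorm_mulVec (toLp 2 x)

omit [DecidableEq n] in
theorem norm_toLp_mulVec_sq (M : Matrix n n ℝ) (x : n → ℝ) :
    ‖toLp 2 (M *ᵥ x)‖ ^ 2 = x ⬝ᵥ (Mᵀ * M) *ᵥ x := by
  rw [← real_inner_self_eq_norm_sq, EuclideanSpace.inner_toLp_toLp, ← mulVec_mulVec,
    dotProduct_mulVec, vecMul_transpose, star_trivial, dotProduct_comm]

theorem l2_opNorm_lt_one_of_posDef {M : Matrix n n ℝ} (hM : (1 - Mᵀ * M).PosDef) : ‖M‖ < 1 := by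
  refine (toEuclideanCLM (𝕜 := ℝ) M).norm_lt_one_of_norm_apply_lt fun x hx => ?_
  cases x with | toLp x =>
  have hx' : x ≠ 0 := by rintro rfl; exact hx rfl
  have h := hM.dotProduct_mulVec_pos hx'
  rw [star_trivial, sub_mulVec, one_mulVec, dotProduct_sub, sub_pos] at h
  rw [toEuclideanCLM_toLp, ← sq_lt_sq₀ (norm_nonneg _) (norm_nonneg _), norm_toLp_mulVec_sq]
  have h1 := (1 : Matrix n n ℝ).norm_toLp_mulVec_sq x
  simp only [one_mulVec, transpose_one, mul_one] at h1
  rwa [h1]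

open scoped MatrixOrder in
theorem exists_l2_opNorm_conj_lt_one_of_posDef {Z R : Matrix n n ℝ} (hR : R.PosDef)
    (hZ : (R - Z * R * Zᵀ).PosDef) :
    ∃ L L' : Matrix n n ℝ, L * L' = 1 ∧ ‖L' * Z * L‖ < 1 := by
  obtain ⟨y, hy, rfl⟩ := CStarAlgebra.isStrictlyPositive_iff_eq_star_mul_self.mp
    hR.isStrictlyPositive
  lift y to (Matrix n n ℝ)ˣ using hy
  set U := (star y)⁻¹
  refine ⟨star y, U, by rw [← Units.coe_star, Units.mul_inv], ?_⟩
  have hU : (U : Matrix n n ℝ) * star (y : Matrix n n ℝ) = 1 := by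
    rw [← Units.coe_star, Units.inv_mul]
  have hU' : (y : Matrix n n ℝ) * star (U : Matrix n n ℝ) = 1 := by
    rw [← star_star (y : Matrix n n ℝ), ← star_mul, hU, star_one]
  -- `R = L Lᴴ` and `N := L⁻¹ Z L` give `1 - N Nᴴ = L⁻¹ (R - Z R Zᴴ) L⁻ᴴ`, so `‖Nᴴ‖ < 1`.
  rw [← l2_opNorm_conjTranspose, conjTranspose_eq_transpose_of_trivial]
  apply l2_opNorm_lt_one_of_posDef
  rw [transpose_transpose, ← conjTranspose_eq_transpose_of_trivial, ← star_eq_conjTranspose]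
  rw [← conjTranspose_eq_transpose_of_trivial, ← star_eq_conjTranspose] at hZ
  convert (Units.isUnit U).posDef_star_right_conjugate_iff.2 hZ using 1
  simp only [star_mul, star_star, mul_sub, sub_mul, ← mul_assoc, hU]
  simp only [mul_assoc, hU']
  simp

theorem mulVec_mulVec_conj {L L' : Matrix n n ℝ} (hL : L * L' = 1) (P : Matrix n n ℝ)
    (x : n → ℝ) : L *ᵥ ((L' * P * L) *ᵥ (L' *ᵥ x)) = P *ᵥ x := by
  rw [mulVec_mulVec, mulVec_mulVec, ← Matrix.mul_assoc, ← Matrix.mul_assoc, hL, Matrix.one_mul,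
    Matrix.mul_assoc, hL, Matrix.mul_one]

theorem norm_toLp_mulVec_smul_add_mulVec_le {L L' : Matrix n n ℝ} (hL : L * L' = 1)
    (Z : Matrix n n ℝ) (y : ℝ) (g a : n → ℝ) :
    ‖toLp 2 (L' *ᵥ (y • g + Z *ᵥ a))‖ ≤
      |y| * (‖L'‖ * ‖toLp 2 g‖) + ‖L' * Z * L‖ * ‖toLp 2 (L' *ᵥ a)‖ := by
  have hconj : L' *ᵥ (Z *ᵥ a) = (L' * Z * L) *ᵥ (L' *ᵥ a) := by
    rw [mulVec_mulVec, mulVec_mulVec, Matrix.mul_assoc _ L, hL, Matrix.mul_one]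
  rw [mulVec_add, mulVec_smul, hconj, WithLp.toLp_add, WithLp.toLp_smul]
  refine (norm_add_le _ _).trans (add_le_add ?_ (norm_toLp_mulVec_le _ _))
  rw [norm_smul, Real.norm_eq_abs]
  exact mul_le_mul_of_nonneg_left (norm_toLp_mulVec_le _ _) (abs_nonneg _)

theorem exists_abs_dotProduct_list_prod_mulVec_le {Z : ℕ → Matrix n n ℝ} {Z₀ R : Matrix n n ℝ}
    (hZ : Tendsto Z atTop (𝓝 Z₀)) (hR : R.PosDef) (hZ₀ : (R - Z₀ * R * Z₀ᵀ).PosDef)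
    {g : ℕ → n → ℝ} (hg : BddAbove (Set.range fun t => ‖toLp 2 (g t)‖)) (F a₁ : n → ℝ)
    {B₀ : ℝ} (hB₀ : 0 ≤ B₀) :
    ∃ ρ c : ℝ, 0 < ρ ∧ ρ < 1 ∧ 0 ≤ c ∧
      ∀ Y : ℕ → ℝ, (∀ t, |Y t| ≤ B₀) → ∀ a : ℕ → n → ℝ, a 1 = a₁ →
        (∀ t, 1 ≤ t → a (t + 1) = Y t • g t + Z t *ᵥ a t) →
        ∀ s t : ℕ, s < t →
          |F ⬝ᵥ ((((List.range (s + 1)).map fun i => Z (t - i)).prod) *ᵥ a (t - s))|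
            ≤ ρ ^ s * c := by
  obtain ⟨L, L', hLL', hL⟩ := exists_l2_opNorm_conj_lt_one_of_posDef hR hZ₀
  set z : ℕ → Matrix n n ℝ := fun t => L' * Z t * L
  obtain ⟨ρ, K, T, hρ0, hρ1, hK1, hK, hT⟩ :=
    exists_le_of_tendsto_lt_one ((tendsto_const_nhds.mul hZ).mul tendsto_const_nhds).norm hL
  obtain ⟨D, hD⟩ := hg
  have hD0 : 0 ≤ D := (norm_nonneg _).trans (hD ⟨0, rfl⟩)
  have hK0 : 0 ≤ K := zero_le_one.trans hK1
  have hρ1' : 0 < 1 - ρ := by linarith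
  set B := B₀ * (‖L'‖ * D)
  set M := K ^ T * (‖toLp 2 (L' *ᵥ a₁)‖ + T * B) + B / (1 - ρ)
  refine ⟨ρ, ‖toLp 2 F‖ * ‖L‖ * ((K / ρ) ^ T * ρ) * M, hρ0, hρ1, by positivity, ?_⟩
  intro Y hY a ha1 ha s t hst
  have hstate : ∀ u, 1 ≤ u → ‖toLp 2 (L' *ᵥ a u)‖ ≤ M := fun u hu =>
    le_of_le_add_mul (x := fun u => ‖toLp 2 (L' *ᵥ a u)‖) (norm_nonneg _) (by positivity) hK1
      hρ1 (fun _ => norm_nonneg _) hK hT (by rw [ha1]) (fun t ht => by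
        rw [ha t ht]
        refine (norm_toLp_mulVec_smul_add_mulVec_le hLL' (Z t) (Y t) (g t) (a t)).trans
          (add_le_add (mul_le_mul (hY t) ?_ (by positivity) hB₀) le_rfl)
        exact mul_le_mul_of_nonneg_left (hD ⟨t, rfl⟩) (norm_nonneg _)) hu
  set P := ((List.range (s + 1)).map fun i => z (t - i)).prod
  have hP : P = L' * ((List.range (s + 1)).map fun i => Z (t - i)).prod * L := by
    rw [← List.prod_map_mul_mul_of_mul_eq_one hLL' (by simp), List.map_map]
    rfl
  rw [← mulVec_mulVec_conj hLL', ← hP]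
  calc _ ≤ ‖toLp 2 F‖ * (‖L‖ * (‖P‖ * ‖toLp 2 (L' *ᵥ a (t - s))‖)) := by
        refine (abs_dotProduct_le_norm_toLp_mul _ _).trans ?_
        gcongr
        exact (norm_toLp_mulVec_le _ _).trans (by gcongr; exact norm_toLp_mulVec_le _ _)
    _ ≤ ‖toLp 2 F‖ * (‖L‖ * ((K / ρ) ^ T * ρ ^ (s + 1) * M)) := by
        gcongr
        exacts [norm_list_prod_map_range_sub_le hρ0 (by linarith) hK hT hst.le,
          hstate _ (by omega)]
    _ = ρ ^ s * (‖toLp 2 F‖ * ‖L‖ * ((K / ρ) ^ T * ρ) * M) := by ring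

end Matrix

noncomputable def kalmanGain {n : Type*} [Fintype n] (F : n → ℝ) (v : ℝ) (R : Matrix n n ℝ) :
    n → ℝ :=
  (F ⬝ᵥ (R *ᵥ F) + v)⁻¹ • (R *ᵥ F)

noncomputable def kalmanClosedLoop {n : Type*} [Fintype n] [DecidableEq n] (G : Matrix n n ℝ)
    (F : n → ℝ) (v : ℝ) (R : Matrix n n ℝ) : Matrix n n ℝ :=
  G * (1 - vecMulVec (kalmanGain F v R) F)

section Kalman

variable {n : Type*} [Fintype n] [DecidableEq n] {G W R : Matrix n n ℝ} {F : n → ℝ} {v : ℝ}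

omit [DecidableEq n] in
theorem Matrix.PosSemidef.dotProduct_mulVec_add_pos (hR : R.PosSemidef) (x : n → ℝ)
    (hv : 0 < v) : 0 < x ⬝ᵥ (R *ᵥ x) + v := by
  have := hR.dotProduct_mulVec_nonneg x
  rw [star_trivial] at this
  linarith

omit [DecidableEq n] in
theorem continuousAt_kalmanGain (hq : F ⬝ᵥ (R *ᵥ F) + v ≠ 0) :
    ContinuousAt (kalmanGain F v) R := by
  unfold kalmanGain
  fun_prop (disch := assumption)

theorem continuousAt_kalmanClosedLoop (hq : F ⬝ᵥ (R *ᵥ F) + v ≠ 0) :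
    ContinuousAt (kalmanClosedLoop G F v) R := by
  have := continuousAt_kalmanGain hq
  unfold kalmanClosedLoop
  fun_prop

theorem riccati_eq_lyapunov (hR : Rᵀ = R) (hq : F ⬝ᵥ (R *ᵥ F) + v ≠ 0)
    (hRic : R = G * (R - (F ⬝ᵥ (R *ᵥ F) + v)⁻¹ • vecMulVec (R *ᵥ F) (R *ᵥ F)) * Gᵀ + W) :
    R = kalmanClosedLoop G F v R * R * (kalmanClosedLoop G F v R)ᵀ
      + (v • vecMulVec (G *ᵥ kalmanGain F v R) (G *ᵥ kalmanGain F v R) + W) := by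
  set q := F ⬝ᵥ (R *ᵥ F) + v
  set u := R *ᵥ F
  have hFR : F ᵥ* R = u := by rw [← hR, vecMul_transpose]
  have hFu : u ⬝ᵥ F = q - v := by simp [q, u, dotProduct_comm]
  have hinner : (1 - q⁻¹ • vecMulVec u F) * R * (1 - q⁻¹ • vecMulVec F u)
      = (R - q⁻¹ • vecMulVec u u) - (v * q⁻¹ * q⁻¹) • vecMulVec u u := by
    simp only [sub_mul, mul_sub, one_mul, mul_one, smul_mul_assoc, mul_smul_comm, vecMulVec_mul,
      mul_vecMulVec, hFR, smul_vecMulVec, vecMulVec_mulVec, op_smul_eq_smul, hFu]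
    match_scalars <;> field_simp
    ring
  have hK : kalmanGain F v R = q⁻¹ • u := rfl
  have hZ : kalmanClosedLoop G F v R = G * (1 - q⁻¹ • vecMulVec u F) := by
    rw [kalmanClosedLoop, hK, smul_vecMulVec]
  have hZT : (kalmanClosedLoop G F v R)ᵀ = (1 - q⁻¹ • vecMulVec F u) * Gᵀ := by
    rw [hZ, transpose_mul, transpose_sub, transpose_one, transpose_smul, transpose_vecMulVec]
  have hGP : vecMulVec (G *ᵥ u) (G *ᵥ u) = G * vecMulVec u u * Gᵀ := by
    rw [mul_vecMulVec, vecMulVec_mul, vecMul_transpose]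
  rw [hZT, hZ, hK, mulVec_smul, smul_vecMulVec, vecMulVec_smul, hGP]
  conv_lhs => rw [hRic]
  have : G * (1 - q⁻¹ • vecMulVec u F) * R * ((1 - q⁻¹ • vecMulVec F u) * Gᵀ) =
      G * ((1 - q⁻¹ • vecMulVec u F) * R * (1 - q⁻¹ • vecMulVec F u)) * Gᵀ := by
    simp only [Matrix.mul_assoc]
  rw [this, hinner]
  simp only [Matrix.mul_sub, Matrix.sub_mul, Matrix.mul_smul, Matrix.smul_mul, Matrix.mul_assoc]
  module

theorem posDef_and_lyapunov_posDef_of_riccati (hv : 0 < v) (hW : W.PosDef)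
    (hR : R.PosSemidef)
    (hRic : R = G * (R - (F ⬝ᵥ (R *ᵥ F) + v)⁻¹ • vecMulVec (R *ᵥ F) (R *ᵥ F)) * Gᵀ + W) :
    R.PosDef ∧ (R - kalmanClosedLoop G F v R * R * (kalmanClosedLoop G F v R)ᵀ).PosDef := by
  have hRs : Rᵀ = R := by
    simpa [conjTranspose_eq_transpose_of_trivial] using hR.isHermitian.eq
  have hD : (v • vecMulVec (G *ᵥ kalmanGain F v R) (G *ᵥ kalmanGain F v R) + W).PosDef := by
    refine PosDef.posSemidef_add (PosSemidef.smul ?_ hv.le) hW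
    simpa using posSemidef_vecMulVec_self_star (G *ᵥ kalmanGain F v R)
  have hZRZ := hR.mul_mul_conjTranspose_same (kalmanClosedLoop G F v R)
  rw [conjTranspose_eq_transpose_of_trivial] at hZRZ
  have hL := riccati_eq_lyapunov hRs (hR.dotProduct_mulVec_add_pos F hv).ne' hRic
  constructor
  · convert PosDef.posSemidef_add hZRZ hD using 1
  · convert hD using 1
    rw [sub_eq_iff_eq_add']
    exact hL

end Kalman

theorem stmt_9_general {n : ℕ} (G W : Matrix (Fin n) (Fin n) ℝ)
    (F a1 : Fin n → ℝ) (v : ℝ) (hv : 0 < v) (hW : W.PosDef)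
    (Rm : ℕ → Matrix (Fin n) (Fin n) ℝ) (Qm : ℕ → ℝ)
    (Am : ℕ → Fin n → ℝ) (Zm : ℕ → Matrix (Fin n) (Fin n) ℝ)
    (hQm : ∀ t, Qm (t + 1) = F ⬝ᵥ (Rm (t + 1) *ᵥ F) + v)
    (hAm : ∀ t, Am (t + 1) = (Qm (t + 1))⁻¹ • (Rm (t + 1) *ᵥ F))
    (hZm : ∀ t, Zm (t + 1) = G * (1 - vecMulVec (Am (t + 1)) F))
    (R : Matrix (Fin n) (Fin n) ℝ)
    (hconv : ∀ i j, Tendsto (fun t => Rm t i j) atTop (nhds (R i j)))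
    (hR : R.PosSemidef)
    (hRic : R = G * (R - (F ⬝ᵥ (R *ᵥ F) + v)⁻¹ • vecMulVec (R *ᵥ F) (R *ᵥ F)) * Gᵀ + W)
    (B0 : ℝ) (hB0 : 0 < B0) :
    ∃ ρ' c : ℝ, 0 < ρ' ∧ ρ' < 1 ∧ 0 ≤ c ∧
      ∀ Y : ℕ → ℝ, (∀ t, |Y t| ≤ B0) →
      ∀ a : ℕ → Fin n → ℝ, a 1 = a1 →
        (∀ t, 1 ≤ t → a (t + 1) = Y t • (G *ᵥ Am t) + Zm t *ᵥ a t) →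
      ∀ s t : ℕ, 0 < s → s < t →
        |F ⬝ᵥ ((((List.range (s + 1)).map fun i => Zm (t - i)).prod) *ᵥ a (t - s))|
          ≤ ρ' ^ s * c := by
  have hq := (hR.dotProduct_mulVec_add_pos F hv).ne'
  have hRlim : Tendsto (fun t => Rm (t + 1)) atTop (𝓝 R) :=
    (tendsto_pi_nhds.2 fun i => tendsto_pi_nhds.2 (hconv i)).comp (tendsto_add_atTop_nat 1)
  have hAm' : ∀ t, Am (t + 1) = kalmanGain F v (Rm (t + 1)) := fun t => by rw [hAm, hQm]; rfl
  have hA : Tendsto Am atTop (𝓝 (kalmanGain F v R)) := (tendsto_add_atTop_iff_nat 1).1 <|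
    ((continuousAt_kalmanGain hq).tendsto.comp hRlim).congr fun t => (hAm' t).symm
  have hZ : Tendsto Zm atTop (𝓝 (kalmanClosedLoop G F v R)) := (tendsto_add_atTop_iff_nat 1).1 <|
    ((continuousAt_kalmanClosedLoop hq).tendsto.comp hRlim).congr fun t => by
      rw [Function.comp_apply, hZm, hAm']
      rfl
  have hg : BddAbove (Set.range fun t => ‖toLp 2 (G *ᵥ Am t)‖) :=
    (((by fun_prop : Continuous fun x : Fin n → ℝ => ‖toLp 2 (G *ᵥ x)‖).tendsto _).comp
      hA).bddAbove_range
  obtain ⟨hRpd, hlyap⟩ := posDef_and_lyapunov_posDef_of_riccati hv hW hR hRic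
  obtain ⟨ρ, c, hρ0, hρ1, hc, h⟩ :=
    exists_abs_dotProduct_list_prod_mulVec_le hZ hRpd hlyap hg F a1 hB0.le
  exact ⟨ρ, c, hρ0, hρ1, hc, fun Y hY a ha1 ha s t _ hst => h Y hY a ha1 ha s t hst⟩

/-- Remainder-term bound, bounded case: For the Kalman filter recursions
`R_t = G C_{t−1} Gᵀ + W`, `Q_t = ⟨F, R_t F⟩ + v`, `A_t = R_t F/Q_t`,
`C_t = R_t − Q_t A_t A_tᵀ`, `Z_t = G(I − A_t Fᵀ)` (for `t ≥ 1`, with `C_0` a symmetric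
positive semidefinite initial covariance), `W` symmetric positive definite, `v > 0`,
assuming `R_t → R` entrywise with `R` a symmetric positive semidefinite solution of the
Riccati fixed-point equation: for any fixed `a_1` and bound `B_0 > 0` there exist
`ρ' ∈ (0,1)` and `c ≥ 0` such that for every sequence `Y` with `|Y_t| ≤ B_0`,
with `a_{t+1} = Y_t·G A_t + Z_t a_t` for `t ≥ 1`, one has for all `0 < s < t`:
`|⟨F, (Z_t Z_{t−1} ⋯ Z_{t−s})·a_{t−s}⟩| ≤ (ρ')ˢ·c`. -/
theorem stmt_9 {n : ℕ} (hn : 1 ≤ n) (G W C0 : Matrix (Fin n) (Fin n) ℝ)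
    (F a1 : Fin n → ℝ) (v : ℝ) (hv : 0 < v) (hW : W.PosDef) (hC0 : C0.PosSemidef)
    (Rm Cm : ℕ → Matrix (Fin n) (Fin n) ℝ) (Qm : ℕ → ℝ)
    (Am : ℕ → Fin n → ℝ) (Zm : ℕ → Matrix (Fin n) (Fin n) ℝ)
    (hCm0 : Cm 0 = C0)
    (hRm : ∀ t, Rm (t + 1) = G * Cm t * Gᵀ + W)
    (hQm : ∀ t, Qm (t + 1) = F ⬝ᵥ (Rm (t + 1) *ᵥ F) + v)
    (hAm : ∀ t, Am (t + 1) = (Qm (t + 1))⁻¹ • (Rm (t + 1) *ᵥ F))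
    (hCm : ∀ t, Cm (t + 1) =
      Rm (t + 1) - Qm (t + 1) • vecMulVec (Am (t + 1)) (Am (t + 1)))
    (hZm : ∀ t, Zm (t + 1) = G * (1 - vecMulVec (Am (t + 1)) F))
    (R : Matrix (Fin n) (Fin n) ℝ)
    (hconv : ∀ i j, Tendsto (fun t => Rm t i j) atTop (nhds (R i j)))
    (hR : R.PosSemidef)
    (hRic : R = G * (R - (F ⬝ᵥ (R *ᵥ F) + v)⁻¹ • vecMulVec (R *ᵥ F) (R *ᵥ F)) * Gᵀ + W)
    (B0 : ℝ) (hB0 : 0 < B0) :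
    ∃ ρ' c : ℝ, 0 < ρ' ∧ ρ' < 1 ∧ 0 ≤ c ∧
      ∀ Y : ℕ → ℝ, (∀ t, |Y t| ≤ B0) →
      ∀ a : ℕ → Fin n → ℝ, a 1 = a1 →
        (∀ t, 1 ≤ t → a (t + 1) = Y t • (G *ᵥ Am t) + Zm t *ᵥ a t) →
      ∀ s t : ℕ, 0 < s → s < t →
        |F ⬝ᵥ ((((List.range (s + 1)).map fun i => Zm (t - i)).prod) *ᵥ a (t - s))|
          ≤ ρ' ^ s * c :=
  stmt_9_general G W F a1 v hv hW Rm Qm Am Zm hQm hAm hZm R hconv hR hRic B0 hB0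
end

section
/- (Failure of exponential decay of the remainder term without process noise.) Let v > 0 and r_0 > 0, let r_t = r_0·v/(v + t·r_0), A_t = r_t/(r_t + v), and Z_t = v/(r_t + v) = 1 − A_t for t ≥ 0. Let (Y_t)_{t≥0} be a real sequence, and define a_0 = 0 and a_{t+1} = A_t·Y_t + Z_t·a_t. Fix an integer s ≥ 0 and suppose (1/t)·Σ_{i=0}^{t−1} Y_i → m as t → ∞ for some real m. Then the remainder term (Z_t·Z_{t−1} ⋯ Z_{t−s})·a_{t−s} converges to m as t → ∞. In particular, if m ≠ 0, then for no fixed s does the remainder term converge to 0, in contrast to the exponential decay that holds when the process noise is positive. -/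
/-!
With `κ = v / r₀` one has `r_t = v / (κ + t)`, hence `A_t = 1 / (κ + t + 1)` and
`Z_t = (κ + t) / (κ + t + 1)`. The recursion is then a running mean,
`a_t = (Σ_{i<t} Y_i) / (κ + t)`, and the product of the `Z`'s telescopes to
`(κ + t - s) / (κ + t + 1)`. So the remainder term is `(Σ_{i<t-s} Y_i) / (κ + t + 1)`, a Cesàro
mean up to a factor tending to `1`.
-/

open Filter Topology Finset

theorem prod_range_sub_eq_div_of_eq_div {K : Type*} [Field K] {Z d : ℕ → K}
    (hZ : ∀ n, Z n = d n / d (n + 1)) (hd : ∀ n, d n ≠ 0) :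
    ∀ {s t : ℕ}, s ≤ t → ∏ i ∈ range (s + 1), Z (t - i) = d (t - s) / d (t + 1)
  | 0, t, _ => by simp [hZ]
  | s + 1, t, hst => by
    have hshift : t - (s + 1) + 1 = t - s := by omega
    rw [prod_range_succ, prod_range_sub_eq_div_of_eq_div hZ hd (by omega), hZ, hshift,
      mul_comm, div_mul_div_cancel₀ (hd _)]

theorem mul_eq_sum_of_running_mean {Y a : ℕ → ℝ} {κ : ℝ} (hκ : 0 ≤ κ) (ha0 : a 0 = 0)
    (ha : ∀ t, a (t + 1) = 1 / (κ + t + 1) * Y t + (κ + t) / (κ + t + 1) * a t) (t : ℕ) :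
    (κ + t) * a t = ∑ i ∈ range t, Y i := by
  induction t with
  | zero => simp [ha0]
  | succ n ih =>
    have hn : κ + n + 1 ≠ 0 := by positivity
    rw [sum_range_succ, ← ih, ha, Nat.cast_succ, ← add_assoc]
    field_simp
    ring

theorem tendsto_sum_div_natCast_add {Y : ℕ → ℝ} {m : ℝ} (c : ℝ)
    (h : Tendsto (fun n : ℕ => (∑ i ∈ range n, Y i) / n) atTop (𝓝 m)) :
    Tendsto (fun n : ℕ => (∑ i ∈ range n, Y i) / (n + c)) atTop (𝓝 m) := by
  have hlim := h.mul (tendsto_natCast_div_add_atTop c)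
  rw [mul_one] at hlim
  refine hlim.congr' ?_
  filter_upwards [eventually_ne_atTop 0] with n hn
  exact div_mul_div_cancel₀ (Nat.cast_ne_zero.2 hn)

section ScalarKalman

variable {v r0 : ℝ} {r : ℕ → ℝ}

theorem covariance_eq (hr0 : 0 < r0) (hr : ∀ t : ℕ, r t = r0 * v / (v + t * r0))
    (t : ℕ) : r t = v / (v / r0 + t) := by
  rw [hr, div_add' _ _ _ hr0.ne', div_div_eq_mul_div, mul_comm r0 v, mul_comm (t : ℝ) r0]

theorem gain_eq (hv : 0 < v) (hr0 : 0 < r0) (hr : ∀ t : ℕ, r t = r0 * v / (v + t * r0))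
    (t : ℕ) : r t / (r t + v) = 1 / (v / r0 + t + 1) := by
  have : 0 < v / r0 + t := by positivity
  rw [covariance_eq hr0 hr]
  field_simp
  ring

theorem residual_gain_eq (hv : 0 < v) (hr0 : 0 < r0)
    (hr : ∀ t : ℕ, r t = r0 * v / (v + t * r0)) (t : ℕ) :
    v / (r t + v) = (v / r0 + t) / (v / r0 + t + 1) := by
  have : 0 < v / r0 + t := by positivity
  rw [covariance_eq hr0 hr]
  field_simp
  ring

end ScalarKalman

/-- Failure of exponential decay of the remainder term without process
noise: With `v > 0`, `r_0 > 0`, `r_t = r_0·v/(v + t·r_0)`, `A_t = r_t/(r_t + v)`,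
`Z_t = v/(r_t + v)`, `a_0 = 0` and `a_{t+1} = A_t·Y_t + Z_t·a_t`, if the Cesàro means
`(1/t)·Σ_{i<t} Y_i` converge to `m`, then for any fixed `s ≥ 0` the remainder term
`(Z_t·Z_{t−1} ⋯ Z_{t−s})·a_{t−s}` converges to `m` as `t → ∞`; in particular, if
`m ≠ 0`, the remainder term does not converge to `0`. -/
theorem stmt_17 (v r0 : ℝ) (hv : 0 < v) (hr0 : 0 < r0) (Y : ℕ → ℝ)
    (r A Z a : ℕ → ℝ)
    (hr : ∀ t : ℕ, r t = r0 * v / (v + t * r0))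
    (hA : ∀ t, A t = r t / (r t + v))
    (hZ : ∀ t, Z t = v / (r t + v))
    (ha0 : a 0 = 0)
    (ha : ∀ t, a (t + 1) = A t * Y t + Z t * a t)
    (s : ℕ) (m : ℝ)
    (hcesaro :
      Tendsto (fun t : ℕ => (∑ i ∈ Finset.range t, Y i) / t) atTop (nhds m)) :
    Tendsto (fun t : ℕ => (∏ i ∈ Finset.range (s + 1), Z (t - i)) * a (t - s))
        atTop (nhds m) ∧
    (m ≠ 0 →
      ¬ Tendsto (fun t : ℕ => (∏ i ∈ Finset.range (s + 1), Z (t - i)) * a (t - s))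
          atTop (nhds 0)) := by
  set κ := v / r0
  have hκ : 0 < κ := div_pos hv hr0
  have hd : ∀ n : ℕ, κ + n ≠ 0 := fun n => by positivity
  have hZ' : ∀ n : ℕ, Z n = (κ + n) / (κ + (n + 1 : ℕ)) := fun n => by
    rw [hZ, residual_gain_eq hv hr0 hr, Nat.cast_succ, add_assoc]
  have ha' : ∀ t : ℕ, a t = (∑ i ∈ range t, Y i) / (κ + t) := fun t =>
    eq_div_of_mul_eq (hd t) <| by
      rw [mul_comm]
      refine mul_eq_sum_of_running_mean hκ.le ha0 (fun n => ?_) t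
      rw [ha, hA, hZ, gain_eq hv hr0 hr, residual_gain_eq hv hr0 hr]
  have hremainder : ∀ t ≥ s, (∏ i ∈ range (s + 1), Z (t - i)) * a (t - s)
      = (∑ i ∈ range (t - s), Y i) / ((t - s : ℕ) + (κ + s + 1)) := fun t hst => by
    rw [prod_range_sub_eq_div_of_eq_div hZ' hd hst, ha', mul_comm,
      div_mul_div_cancel₀ (hd _), Nat.cast_sub hst, Nat.cast_succ]
    ring_nf
  have hlim : Tendsto (fun t : ℕ => (∏ i ∈ range (s + 1), Z (t - i)) * a (t - s))
      atTop (𝓝 m) :=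
    ((tendsto_sum_div_natCast_add _ hcesaro).comp (tendsto_sub_atTop_nat s)).congr'
      (eventually_atTop.2 ⟨s, fun t hst => (hremainder t hst).symm⟩)
  exact ⟨hlim, fun hm h0 => hm (tendsto_nhds_unique hlim h0)⟩
end
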